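/- Let D be an integral domain over a field k admitting a nontrivial exponential map, and let D[W] be a polynomial ring in one variable over D. Then the Derksen invariant of D[W] equals D[W], i.e. D[W] is generated as a k-algebra by the rings of invariants of nontrivial exponential maps on D[W]. -/

import Mathlib

/-!
`D[W]` carries two nontrivial exponential maps: the translation `W ↦ W + U`, whose invariants
contain `D`, and the coefficientwise extension of a nontrivial exponential map of `D`, which
fixes `W`. Hence the Derksen invariant contains `D` and `W`, which generate `D[W]`.
-/

open Polynomial

/-- An exponential map on a `k`-algebra `B`: a `k`-algebra homomorphism
`φ : B → B[U]` with `ε₀ ∘ φ = id` and the coaction condition `φ_V φ_U = φ_{U+V}`. -/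
structure ExpMap (k B : Type*) [CommRing k] [CommRing B] [Algebra k B] where
  toAlgHom : B →ₐ[k] Polynomial B
  eval_zero : ∀ b, (toAlgHom b).eval 0 = b
  coaction : ∀ b, (toAlgHom b).map toAlgHom.toRingHom =
    (toAlgHom b).eval₂ (Polynomial.C.comp Polynomial.C)
      (Polynomial.X + Polynomial.C Polynomial.X)

namespace ExpMap

variable {k B : Type*} [CommRing k] [CommRing B] [Algebra k B]

/-- The ring of invariants `B^φ = {b ∈ B : φ(b) = b}` of an exponential map. -/
noncomputable def fixed (φ : ExpMap k B) : Subalgebra k B :=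
  AlgHom.equalizer φ.toAlgHom Polynomial.CAlgHom

/-- An exponential map is nontrivial if `B^φ ≠ B`. -/
def IsNontrivial (φ : ExpMap k B) : Prop := φ.fixed ≠ ⊤

end ExpMap

/-- The Makar-Limanov invariant: the intersection of the rings of invariants of all
exponential maps on `B`. -/
noncomputable def ML (k B : Type*) [CommRing k] [CommRing B] [Algebra k B] : Subalgebra k B :=
  ⨅ φ : ExpMap k B, φ.fixed

/-- The Derksen invariant: the `k`-subalgebra of `B` generated by the rings of invariants
of all nontrivial exponential maps on `B`. -/
noncomputable def DK (k B : Type*) [CommRing k] [CommRing B] [Algebra k B] : Subalgebra k B :=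
  Algebra.adjoin k (⋃ φ ∈ {φ : ExpMap k B | φ.IsNontrivial}, (φ.fixed : Set B))

namespace ExpMap

variable {k B : Type*} [CommRing k] [CommRing B] [Algebra k B]

noncomputable def ofRingHom (ψ : B →+* B[X])
    (commutes : ∀ c : k, ψ (algebraMap k B c) = algebraMap k B[X] c)
    (eval_zero : (evalRingHom 0).comp ψ = RingHom.id B)
    (coaction : (mapRingHom ψ).comp ψ = (eval₂RingHom (C.comp C : B →+* B[X][X]) (X + C X)).comp ψ) :
    ExpMap k B where
  toAlgHom := { ψ with commutes' := commutes }
  eval_zero b := RingHom.congr_fun eval_zero b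
  coaction b := RingHom.congr_fun coaction b

@[simp] lemma ofRingHom_apply (ψ : B →+* B[X]) (commutes eval_zero coaction) (b : B) :
    (ofRingHom (k := k) ψ commutes eval_zero coaction).toAlgHom b = ψ b := rfl

theorem mem_fixed_iff (φ : ExpMap k B) (b : B) : b ∈ φ.fixed ↔ φ.toAlgHom b = C b :=
  AlgHom.mem_equalizer _ _ b

theorem isNontrivial_iff (φ : ExpMap k B) : φ.IsNontrivial ↔ ∃ b, φ.toAlgHom b ≠ C b := by
  simp only [IsNontrivial, Ne, Algebra.eq_top_iff, mem_fixed_iff, not_forall]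

theorem IsNontrivial.nontrivial {φ : ExpMap k B} (hφ : φ.IsNontrivial) : Nontrivial B := by
  obtain ⟨b, hb⟩ := φ.isNontrivial_iff.mp hφ
  by_contra h
  rw [not_nontrivial_iff_subsingleton] at h
  exact hb (Subsingleton.elim _ _)

theorem fixed_le_DK {φ : ExpMap k B} (hφ : φ.IsNontrivial) : φ.fixed ≤ DK k B :=
  fun _ hb => Algebra.subset_adjoin (Set.mem_biUnion hφ hb)

end ExpMap

theorem Polynomial.subalgebra_eq_top_of_C_mem_of_X_mem {k D : Type*} [CommRing k] [CommRing D]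
    [Algebra k D] {S : Subalgebra k D[X]} (hC : ∀ a, C a ∈ S) (hX : X ∈ S) : S = ⊤ := by
  rw [eq_top_iff]
  rintro p -
  induction p using Polynomial.induction_on with
  | C a => exact hC a
  | add p q hp hq => exact add_mem hp hq
  | monomial n a ih =>
    rw [pow_succ, ← mul_assoc]
    exact mul_mem ih hX

section Translation

variable (k D : Type*) [CommRing k] [CommRing D] [Algebra k D]

/-- `p(W) ↦ p(W + U)`, with `W` the inner and `U` the outer variable of `D[W][U]`. -/
noncomputable def Polynomial.translateRingHom : D[X] →+* D[X][X] :=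
  eval₂RingHom (C.comp C) (X + C X)

@[simp] lemma Polynomial.translateRingHom_C (a : D) : translateRingHom D (C a) = C (C a) := by
  simp [translateRingHom]

@[simp] lemma Polynomial.translateRingHom_X : translateRingHom D X = X + C X := by
  simp [translateRingHom]

noncomputable def ExpMap.translate : ExpMap k D[X] :=
  ofRingHom (translateRingHom D) (fun c => by simp [Polynomial.algebraMap_apply])
    (by apply ringHom_ext <;> simp)
    (by
      apply ringHom_ext
      · intro a; simp
      · simp; ring)

variable {k D}

theorem ExpMap.C_mem_fixed_translate (a : D) : C a ∈ (translate k D).fixed := by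
  simp [mem_fixed_iff, translate]

theorem ExpMap.isNontrivial_translate [Nontrivial D] : (translate k D).IsNontrivial := by
  refine (isNontrivial_iff _).mpr ⟨X, fun h => ?_⟩
  simp [translate] at h

end Translation

section Extension

variable {k D : Type*} [CommRing k] [CommRing D] [Algebra k D]

noncomputable def ExpMap.polynomialExtensionRingHom (φ : ExpMap k D) : D[X] →+* D[X][X] :=
  eval₂RingHom ((mapRingHom C).comp φ.toAlgHom.toRingHom) (C X)

@[simp] lemma ExpMap.polynomialExtensionRingHom_C (φ : ExpMap k D) (a : D) :
    φ.polynomialExtensionRingHom (C a) = (φ.toAlgHom a).map C := by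
  simp [polynomialExtensionRingHom]

@[simp] lemma ExpMap.polynomialExtensionRingHom_X (φ : ExpMap k D) :
    φ.polynomialExtensionRingHom X = C X := by
  simp [polynomialExtensionRingHom]

noncomputable def ExpMap.polynomialExtension (φ : ExpMap k D) : ExpMap k D[X] :=
  ofRingHom φ.polynomialExtensionRingHom
    (fun c => by simp [Polynomial.algebraMap_apply, AlgHom.commutes])
    (by apply ringHom_ext <;> simp [eval_zero_map, φ.eval_zero])
    (by
      have hcomp : φ.polynomialExtensionRingHom.comp C =
          (mapRingHom C).comp φ.toAlgHom.toRingHom := by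
        ext a; simp
      apply ringHom_ext
      · intro a
        -- on constants this is the coaction of `φ`, transported along `C : D → D[W]`
        simp only [RingHom.comp_apply, polynomialExtensionRingHom_C, coe_mapRingHom,
          coe_eval₂RingHom, map_map, hcomp]
        rw [← map_map, ← coe_mapRingHom (mapRingHom C), φ.coaction a, hom_eval₂, eval₂_map]
        congr 1
        · ext d; simp
        · simp
      · simp)

theorem ExpMap.X_mem_fixed_polynomialExtension (φ : ExpMap k D) :
    X ∈ φ.polynomialExtension.fixed := by
  simp [mem_fixed_iff, polynomialExtension]

theorem ExpMap.IsNontrivial.polynomialExtension {φ : ExpMap k D} (hφ : φ.IsNontrivial) :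
    φ.polynomialExtension.IsNontrivial := by
  obtain ⟨d, hd⟩ := φ.isNontrivial_iff.mp hφ
  refine (isNontrivial_iff _).mpr ⟨C d, fun h => hd (map_injective C C_injective ?_)⟩
  simpa [ExpMap.polynomialExtension] using h

end Extension

theorem stmt6_general {k D : Type*} [Field k] [CommRing D] [Algebra k D]
    (hD : ∃ φ : ExpMap k D, φ.IsNontrivial) :
    DK k (Polynomial D) = ⊤ := by
  obtain ⟨φ, hφ⟩ := hD
  have := hφ.nontrivial
  refine subalgebra_eq_top_of_C_mem_of_X_mem (fun a => ?_) ?_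
  · exact ExpMap.fixed_le_DK ExpMap.isNontrivial_translate (ExpMap.C_mem_fixed_translate a)
  · exact ExpMap.fixed_le_DK hφ.polynomialExtension φ.X_mem_fixed_polynomialExtension

/-- If a `k`-domain `D` is not rigid (admits a nontrivial exponential map), then the Derksen
invariant of the polynomial ring `D[W]` is all of `D[W]`. -/
theorem stmt6 {k D : Type*} [Field k] [CommRing D] [IsDomain D] [Algebra k D]
    (hD : ∃ φ : ExpMap k D, φ.IsNontrivial) :
    DK k (Polynomial D) = ⊤ :=
  stmt6_general hD
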